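/- arXiv:2407.21251 — 11 statements merged into one kernel-verified Lean document; each statement's English description precedes it below -/
import Mathlib

section
/- Let p₁, p₂ ≥ 3 be even integers with 1/p₁ + 1/p₂ < 1/2 and d = gcd(p₁,p₂). Then each of the following triples (r₀,r₁,r₂) of rationals satisfies the Frobenius congruences for the screw motion groups of signature (2,p₁,p₂): the triples (0, m/d, m/d) for every integer m with −⌊d/2⌋ ≤ m ≤ ⌊d/2⌋, the triples (ε/2, 0, ε/2) for ε ∈ {1,−1}, and the triples (ε/2, ε/2, 0) for ε ∈ {1,−1}. -/
/-- A rational number is an integer. -/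
def IsIntQ (q : ℚ) : Prop := ∃ k : ℤ, q = (k : ℚ)

/-- The Frobenius congruences for the screw motion groups of signature `(2, p₁, p₂)`:
`2·r₀ ∈ ℤ`, `p₁·r₁ ∈ ℤ`, `p₂·r₂ ∈ ℤ`, `p₂·(r₀ + r₁) ∈ ℤ`, and `r₂ − r₀ − r₁ ∈ ℤ`. -/
def FrobCong (p₁ p₂ : ℕ) (r₀ r₁ r₂ : ℚ) : Prop :=
  IsIntQ (2 * r₀) ∧ IsIntQ ((p₁ : ℚ) * r₁) ∧ IsIntQ ((p₂ : ℚ) * r₂) ∧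
    IsIntQ ((p₂ : ℚ) * (r₀ + r₁)) ∧ IsIntQ (r₂ - r₀ - r₁)

/-- Theorem 3.1, case 1 (both p₁ and p₂ even), soundness direction. -/
theorem frobenius_soundness_even_even (p₁ p₂ : ℕ) (hp₁ : 3 ≤ p₁) (hp₂ : 3 ≤ p₂)
    (he₁ : Even p₁) (he₂ : Even p₂)
    (hhyp : (1 : ℚ) / p₁ + 1 / p₂ < 1 / 2) :
    (∀ m : ℤ, -((Nat.gcd p₁ p₂ : ℤ) / 2) ≤ m → m ≤ (Nat.gcd p₁ p₂ : ℤ) / 2 →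
      FrobCong p₁ p₂ 0 ((m : ℚ) / (Nat.gcd p₁ p₂ : ℚ)) ((m : ℚ) / (Nat.gcd p₁ p₂ : ℚ))) ∧
    (∀ ε : ℚ, (ε = 1 ∨ ε = -1) → FrobCong p₁ p₂ (ε / 2) 0 (ε / 2)) ∧
    (∀ ε : ℚ, (ε = 1 ∨ ε = -1) → FrobCong p₁ p₂ (ε / 2) (ε / 2) 0) := by
  have hd : 0 < Nat.gcd p₁ p₂ := Nat.gcd_pos_of_pos_left _ (by omega)
  obtain ⟨a, ha⟩ := Nat.gcd_dvd_left p₁ p₂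
  obtain ⟨b, hb⟩ := Nat.gcd_dvd_right p₁ p₂
  obtain ⟨k₂, hk₂⟩ := he₂
  have hdQ : (Nat.gcd p₁ p₂ : ℚ) ≠ 0 := by exact_mod_cast hd.ne'
  have ha' : (p₁ : ℚ) = (Nat.gcd p₁ p₂ : ℚ) * a := by exact_mod_cast ha
  have hb' : (p₂ : ℚ) = (Nat.gcd p₁ p₂ : ℚ) * b := by exact_mod_cast hb
  have hk₂' : (p₂ : ℚ) = (k₂ : ℚ) + k₂ := by exact_mod_cast hk₂
  have key : ∀ m : ℤ, IsIntQ ((p₁ : ℚ) * ((m : ℚ) / (Nat.gcd p₁ p₂ : ℚ))) ∧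
      IsIntQ ((p₂ : ℚ) * ((m : ℚ) / (Nat.gcd p₁ p₂ : ℚ))) := by
    intro m
    constructor
    · exact ⟨a * m, by rw [ha']; push_cast; field_simp⟩
    · exact ⟨b * m, by rw [hb']; push_cast; field_simp⟩
  have hε' : ∀ ε : ℚ, (ε = 1 ∨ ε = -1) → ∃ e : ℤ, ε = (e : ℚ) := by
    rintro ε (h | h)
    · exact ⟨1, by rw [h]; norm_num⟩
    · exact ⟨-1, by rw [h]; norm_num⟩
  refine ⟨fun m _ _ => ?_, fun ε hε => ?_, fun ε hε => ?_⟩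
  · exact ⟨⟨0, by norm_num⟩, (key m).1, (key m).2,
      by simpa using (key m).2, ⟨0, by ring_nf⟩⟩
  · obtain ⟨e, he⟩ := hε' ε hε
    refine ⟨⟨e, by rw [he]; ring⟩, ⟨0, by norm_num⟩,
      ⟨k₂ * e, by rw [he, hk₂']; push_cast; ring⟩,
      ⟨k₂ * e, by rw [he, hk₂']; push_cast; ring⟩, ⟨0, by ring_nf⟩⟩
  · obtain ⟨e, he⟩ := hε' ε hε
    obtain ⟨k₁, hk₁⟩ := he₁
    have hk₁' : (p₁ : ℚ) = (k₁ : ℚ) + k₁ := by exact_mod_cast hk₁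
    refine ⟨⟨e, by rw [he]; ring⟩, ⟨k₁ * e, by rw [he, hk₁']; push_cast; ring⟩,
      ⟨0, by norm_num⟩, ⟨2 * k₂ * e, by rw [he, hk₂']; push_cast; ring⟩,
      ⟨-e, by rw [he]; push_cast; ring⟩⟩
end

section
/- Let p₁ ≥ 3 be odd and p₂ ≥ 4 be even with 1/p₁ + 1/p₂ < 1/2 and d = gcd(p₁,p₂). Then each of the following triples (r₀,r₁,r₂) of rationals satisfies the Frobenius congruences for the screw motion groups of signature (2,p₁,p₂): the triples (0, m/d, m/d) for every integer m with −⌊d/2⌋ ≤ m ≤ ⌊d/2⌋, and the triples (ε/2, 0, ε/2) for ε ∈ {1,−1}. -/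
lemma div_gcd_int (p : ℕ) (m : ℤ) (hd : (Nat.gcd p₁ p₂ : ℤ) ∣ (p : ℤ))
    (hg : (0:ℚ) < (Nat.gcd p₁ p₂ : ℚ)) :
    IsIntQ ((p : ℚ) * ((m : ℚ) / (Nat.gcd p₁ p₂ : ℚ))) := by
  obtain ⟨k, hk⟩ := hd
  refine ⟨k * m, ?_⟩
  have hne : (Nat.gcd p₁ p₂ : ℚ) ≠ 0 := ne_of_gt hg
  have : (p : ℚ) = (Nat.gcd p₁ p₂ : ℚ) * (k : ℚ) := by exact_mod_cast hk
  rw [this]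
  push_cast
  field_simp

/-- Theorem 3.1, case 2 (p₁ odd, p₂ even), soundness direction. -/
theorem frobenius_soundness_odd_even (p₁ p₂ : ℕ) (hp₁ : 3 ≤ p₁) (hp₂ : 4 ≤ p₂)
    (ho₁ : Odd p₁) (he₂ : Even p₂)
    (hhyp : (1 : ℚ) / p₁ + 1 / p₂ < 1 / 2) :
    (∀ m : ℤ, -((Nat.gcd p₁ p₂ : ℤ) / 2) ≤ m → m ≤ (Nat.gcd p₁ p₂ : ℤ) / 2 →
      FrobCong p₁ p₂ 0 ((m : ℚ) / (Nat.gcd p₁ p₂ : ℚ)) ((m : ℚ) / (Nat.gcd p₁ p₂ : ℚ))) ∧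
    (∀ ε : ℚ, (ε = 1 ∨ ε = -1) → FrobCong p₁ p₂ (ε / 2) 0 (ε / 2)) := by
  have hgpos : 0 < Nat.gcd p₁ p₂ := Nat.gcd_pos_of_pos_left _ (by omega)
  have hg : (0:ℚ) < (Nat.gcd p₁ p₂ : ℚ) := by exact_mod_cast hgpos
  constructor
  · intro m _ _
    refine ⟨⟨0, by norm_num⟩, ?_, ?_, ?_, ⟨0, by ring_nf⟩⟩
    · exact div_gcd_int p₁ m (by exact_mod_cast Nat.gcd_dvd_left p₁ p₂) hg
    · exact div_gcd_int p₂ m (by exact_mod_cast Nat.gcd_dvd_right p₁ p₂) hg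
    · simpa using div_gcd_int p₂ m (by exact_mod_cast Nat.gcd_dvd_right p₁ p₂) hg
  · intro ε hε
    obtain ⟨c, hc⟩ := he₂
    have hc' : (p₂ : ℚ) = 2 * c := by rw [hc]; push_cast; ring
    rcases hε with rfl | rfl
    · exact ⟨⟨1, by norm_num⟩, ⟨0, by norm_num⟩,
        ⟨(c:ℤ), by rw [hc']; push_cast; ring⟩, ⟨(c:ℤ), by rw [hc']; push_cast; ring⟩, ⟨0, by norm_num⟩⟩
    · exact ⟨⟨-1, by norm_num⟩, ⟨0, by norm_num⟩,
        ⟨-(c:ℤ), by rw [hc']; push_cast; ring⟩, ⟨-(c:ℤ), by rw [hc']; push_cast; ring⟩,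
        ⟨0, by norm_num⟩⟩
end

section
/- Let p₁ ≥ 4 be even and p₂ ≥ 3 be odd with 1/p₁ + 1/p₂ < 1/2 and d = gcd(p₁,p₂). Then each of the following triples (r₀,r₁,r₂) of rationals satisfies the Frobenius congruences for the screw motion groups of signature (2,p₁,p₂): the triples (0, m/d, m/d) for every integer m with −⌊d/2⌋ ≤ m ≤ ⌊d/2⌋, and the triples (ε/2, ε/2, 0) for ε ∈ {1,−1}. -/
lemma dvd_mul_div_int (p d : ℕ) (c : ℕ) (hc : p = d * c) (hd : (d : ℚ) ≠ 0) (m : ℤ) :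
    IsIntQ ((p : ℚ) * ((m : ℚ) / (d : ℚ))) := by
  refine ⟨c * m, ?_⟩
  subst hc
  push_cast
  field_simp

/-- Theorem 3.1, case 3 (p₁ even, p₂ odd), soundness direction. -/
theorem frobenius_soundness_even_odd (p₁ p₂ : ℕ) (hp₁ : 4 ≤ p₁) (hp₂ : 3 ≤ p₂)
    (he₁ : Even p₁) (ho₂ : Odd p₂)
    (hhyp : (1 : ℚ) / p₁ + 1 / p₂ < 1 / 2) :
    (∀ m : ℤ, -((Nat.gcd p₁ p₂ : ℤ) / 2) ≤ m → m ≤ (Nat.gcd p₁ p₂ : ℤ) / 2 →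
      FrobCong p₁ p₂ 0 ((m : ℚ) / (Nat.gcd p₁ p₂ : ℚ)) ((m : ℚ) / (Nat.gcd p₁ p₂ : ℚ))) ∧
    (∀ ε : ℚ, (ε = 1 ∨ ε = -1) → FrobCong p₁ p₂ (ε / 2) (ε / 2) 0) := by
  have hd0 : (Nat.gcd p₁ p₂ : ℚ) ≠ 0 := by
    have : 0 < Nat.gcd p₁ p₂ := Nat.gcd_pos_of_pos_left _ (by omega)
    exact_mod_cast this.ne'
  constructor
  · intro m _ _
    obtain ⟨c₁, hc₁⟩ := Nat.gcd_dvd_left p₁ p₂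
    obtain ⟨c₂, hc₂⟩ := Nat.gcd_dvd_right p₁ p₂
    refine ⟨⟨0, by norm_num⟩, dvd_mul_div_int _ _ _ hc₁ hd0 m,
      dvd_mul_div_int _ _ _ hc₂ hd0 m, ?_, ⟨0, by ring_nf⟩⟩
    · have := dvd_mul_div_int p₂ _ _ hc₂ hd0 m
      simpa using this
  · intro ε hε
    obtain ⟨k, hk⟩ := he₁
    have hεi : IsIntQ (2 * (ε / 2)) := by
      rcases hε with rfl | rfl
      · exact ⟨1, by norm_num⟩
      · exact ⟨-1, by norm_num⟩
    rcases hε with rfl | rfl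
    · exact ⟨hεi, ⟨k, by subst hk; push_cast; ring⟩, ⟨0, by norm_num⟩,
        ⟨p₂, by push_cast; ring⟩, ⟨-1, by push_cast; ring⟩⟩
    · exact ⟨hεi, ⟨-k, by subst hk; push_cast; ring⟩, ⟨0, by norm_num⟩,
        ⟨-p₂, by push_cast; ring⟩, ⟨1, by push_cast; ring⟩⟩
end

section
/- Let p₁, p₂ ≥ 3 be odd integers with 1/p₁ + 1/p₂ < 1/2 and d = gcd(p₁,p₂). A triple (r₀,r₁,r₂) of rationals satisfies the Frobenius congruences for the screw motion groups of signature (2,p₁,p₂) if and only if r₀ ∈ ℤ, d·r₁ ∈ ℤ, and r₂ − r₁ ∈ ℤ; that is, modulo 1 the solutions are exactly the triples (0, r₁, r₁) with d·r₁ ∈ ℤ. -/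
lemma isIntQ_gcd_mul (a b : ℤ) (q : ℚ) (ha : IsIntQ ((a : ℚ) * q))
    (hb : IsIntQ ((b : ℚ) * q)) : IsIntQ ((Int.gcd a b : ℚ) * q) := by
  obtain ⟨k, hk⟩ := ha
  obtain ⟨l, hl⟩ := hb
  refine ⟨Int.gcdA a b * k + Int.gcdB a b * l, ?_⟩
  have h := Int.gcd_eq_gcd_ab a b
  have : ((Int.gcd a b : ℤ) : ℚ) = (a : ℚ) * (Int.gcdA a b : ℚ) + (b : ℚ) * (Int.gcdB a b : ℚ) := by
    rw [h]; push_cast; ring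
  push_cast
  calc (Int.gcd a b : ℚ) * q
      = (Int.gcdA a b : ℚ) * ((a : ℚ) * q) + (Int.gcdB a b : ℚ) * ((b : ℚ) * q) := by
        rw [← Int.cast_natCast, this]; ring
    _ = (Int.gcdA a b : ℚ) * k + (Int.gcdB a b : ℚ) * l := by rw [hk, hl]

/-- Theorem 3.1, case 4 (both p₁ and p₂ odd), congruence-level characterization. -/
theorem frobenius_characterization_odd_odd (p₁ p₂ : ℕ) (hp₁ : 3 ≤ p₁) (hp₂ : 3 ≤ p₂)
    (ho₁ : Odd p₁) (ho₂ : Odd p₂)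
    (hhyp : (1 : ℚ) / p₁ + 1 / p₂ < 1 / 2) (r₀ r₁ r₂ : ℚ) :
    FrobCong p₁ p₂ r₀ r₁ r₂ ↔
      IsIntQ r₀ ∧ IsIntQ ((Nat.gcd p₁ p₂ : ℚ) * r₁) ∧ IsIntQ (r₂ - r₁) := by
  constructor
  · rintro ⟨⟨a, ha⟩, ⟨b, hb⟩, ⟨c, hc⟩, ⟨e, he⟩, ⟨f, hf⟩⟩
    -- p₁ p₂ r₀ ∈ ℤ
    have hpp : IsIntQ (((p₁ * p₂ : ℤ) : ℚ) * r₀) := by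
      refine ⟨p₁ * e - p₂ * b, ?_⟩
      push_cast
      have : (p₁ : ℚ) * ((p₂ : ℚ) * (r₀ + r₁)) - (p₂ : ℚ) * ((p₁ : ℚ) * r₁)
          = (p₁ : ℚ) * (p₂ : ℚ) * r₀ := by ring
      rw [← this, he, hb]
    -- gcd 2 (p₁p₂) = 1
    have hr0 : IsIntQ r₀ := by
      have h := isIntQ_gcd_mul 2 (p₁ * p₂) r₀ ⟨a, by push_cast at ha ⊢; exact ha⟩ hpp
      have hodd : Odd (p₁ * p₂) := ho₁.mul ho₂
      have hg : Int.gcd 2 ((p₁ : ℤ) * p₂) = 1 := by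
        have h2 : ((2 : ℕ) : ℤ) = 2 := by norm_num
        rw [← h2, ← Nat.cast_mul, Int.gcd_natCast_natCast]
        exact Nat.coprime_two_left.mpr hodd
      rw [hg] at h
      simpa using h
    obtain ⟨k0, hk0⟩ := hr0
    refine ⟨⟨k0, hk0⟩, ?_, ?_⟩
    · -- p₂ r₁ ∈ ℤ: p₂(r₀+r₁) - p₂ r₀
      have hp2r1 : IsIntQ ((p₂ : ℚ) * r₁) := by
        refine ⟨e - p₂ * k0, ?_⟩
        push_cast
        have : (p₂ : ℚ) * r₁ = (p₂ : ℚ) * (r₀ + r₁) - (p₂ : ℚ) * r₀ := by ring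
        rw [this, he, hk0]
      have h := isIntQ_gcd_mul (p₁ : ℤ) (p₂ : ℤ) r₁ ⟨b, hb⟩ hp2r1
      rwa [Int.gcd_natCast_natCast] at h
    · exact ⟨f + k0, by push_cast; rw [← hk0]; linarith [hf]⟩
  · rintro ⟨⟨a, ha⟩, ⟨b, hb⟩, ⟨c, hc⟩⟩
    have hd1 : (Nat.gcd p₁ p₂ : ℤ) ∣ (p₁ : ℤ) := Int.natCast_dvd_natCast.mpr (Nat.gcd_dvd_left _ _)
    have hd2 : (Nat.gcd p₁ p₂ : ℤ) ∣ (p₂ : ℤ) := Int.natCast_dvd_natCast.mpr (Nat.gcd_dvd_right _ _)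
    obtain ⟨m₁, hm₁⟩ := hd1
    obtain ⟨m₂, hm₂⟩ := hd2
    have hq1 : (p₁ : ℚ) = (Nat.gcd p₁ p₂ : ℚ) * (m₁ : ℚ) := by exact_mod_cast hm₁
    have hq2 : (p₂ : ℚ) = (Nat.gcd p₁ p₂ : ℚ) * (m₂ : ℚ) := by exact_mod_cast hm₂
    refine ⟨⟨2 * a, by push_cast; rw [ha]⟩, ⟨m₁ * b, ?_⟩, ⟨m₂ * b + p₂ * c, ?_⟩,
      ⟨p₂ * a + m₂ * b, ?_⟩, ⟨c - a, ?_⟩⟩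
    · push_cast
      linear_combination (m₁ : ℚ) * hb + r₁ * hq1
    · push_cast
      linear_combination (m₂ : ℚ) * hb + (p₂ : ℚ) * hc + r₁ * hq2
    · push_cast
      linear_combination (p₂ : ℚ) * ha + (m₂ : ℚ) * hb + r₁ * hq2
    · push_cast
      linear_combination hc - ha
end

section
/- Let p₁, p₂ ≥ 3 be integers with 1/p₁ + 1/p₂ < 1/2, with p₂ even, and let d = gcd(p₁,p₂). A triple (r₀,r₁,r₂) of rationals satisfies the Frobenius congruences for the screw motion groups of signature (2,p₁,p₂) if and only if 2·r₀ ∈ ℤ, d·r₁ ∈ ℤ, and r₂ − r₀ − r₁ ∈ ℤ; that is, modulo 1 the solutions are exactly the triples (0, r₁, r₁) and (1/2, r₁, r₁ + 1/2) with d·r₁ ∈ ℤ. -/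
lemma IsIntQ.add {a b : ℚ} (ha : IsIntQ a) (hb : IsIntQ b) : IsIntQ (a + b) := by
  obtain ⟨k, rfl⟩ := ha; obtain ⟨l, rfl⟩ := hb; exact ⟨k + l, by push_cast; ring⟩

lemma IsIntQ.sub {a b : ℚ} (ha : IsIntQ a) (hb : IsIntQ b) : IsIntQ (a - b) := by
  obtain ⟨k, rfl⟩ := ha; obtain ⟨l, rfl⟩ := hb; exact ⟨k - l, by push_cast; ring⟩

lemma IsIntQ.intMul {a : ℚ} (ha : IsIntQ a) (c : ℤ) : IsIntQ ((c : ℚ) * a) := by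
  obtain ⟨k, rfl⟩ := ha; exact ⟨c * k, by push_cast; ring⟩

/-- Theorem 3.1, cases 1 and 2 (p₂ even), complete congruence-level characterization. -/
theorem frobenius_characterization_p₂_even (p₁ p₂ : ℕ) (hp₁ : 3 ≤ p₁) (hp₂ : 3 ≤ p₂)
    (he₂ : Even p₂)
    (hhyp : (1 : ℚ) / p₁ + 1 / p₂ < 1 / 2) (r₀ r₁ r₂ : ℚ) :
    FrobCong p₁ p₂ r₀ r₁ r₂ ↔
      IsIntQ (2 * r₀) ∧ IsIntQ ((Nat.gcd p₁ p₂ : ℚ) * r₁) ∧ IsIntQ (r₂ - r₀ - r₁) := by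
  obtain ⟨m, hm⟩ := he₂
  have hp₂r₀ : IsIntQ (2 * r₀) → IsIntQ ((p₂ : ℚ) * r₀) := fun h => by
    have := h.intMul (m : ℤ)
    have heq : ((m : ℤ) : ℚ) * (2 * r₀) = (p₂ : ℚ) * r₀ := by
      rw [hm]; push_cast; ring
    rwa [heq] at this
  constructor
  · rintro ⟨h0, h1, h2, h01, hd⟩
    refine ⟨h0, ?_, hd⟩
    have hp2r1 : IsIntQ ((p₂ : ℚ) * r₁) := by
      have := h01.sub (hp₂r₀ h0)
      have heq : (p₂ : ℚ) * (r₀ + r₁) - (p₂ : ℚ) * r₀ = (p₂ : ℚ) * r₁ := by ring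
      rwa [heq] at this
    have hbez : ((Nat.gcd p₁ p₂ : ℤ) : ℚ) = (p₁ : ℚ) * (Nat.gcdA p₁ p₂ : ℚ)
        + (p₂ : ℚ) * (Nat.gcdB p₁ p₂ : ℚ) := by
      have := Nat.gcd_eq_gcd_ab p₁ p₂
      exact_mod_cast congrArg (fun z : ℤ => (z : ℚ)) this
    have := (h1.intMul (Nat.gcdA p₁ p₂)).add (hp2r1.intMul (Nat.gcdB p₁ p₂))
    have heq : ((Nat.gcdA p₁ p₂ : ℤ) : ℚ) * ((p₁ : ℚ) * r₁)
        + ((Nat.gcdB p₁ p₂ : ℤ) : ℚ) * ((p₂ : ℚ) * r₁) = (Nat.gcd p₁ p₂ : ℚ) * r₁ := by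
      have h' : (Nat.gcd p₁ p₂ : ℚ) = (p₁ : ℚ) * (Nat.gcdA p₁ p₂ : ℚ)
          + (p₂ : ℚ) * (Nat.gcdB p₁ p₂ : ℚ) := by exact_mod_cast hbez
      rw [h']; ring
    rwa [heq] at this
  · rintro ⟨h0, hg, hd⟩
    have hdr : IsIntQ ((Nat.gcd p₁ p₂ : ℚ) * r₁) := hg
    obtain ⟨c₁, hc₁⟩ := Nat.gcd_dvd_left p₁ p₂
    obtain ⟨c₂, hc₂⟩ := Nat.gcd_dvd_right p₁ p₂
    have h1 : IsIntQ ((p₁ : ℚ) * r₁) := by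
      have := hdr.intMul (c₁ : ℤ)
      have heq : ((c₁ : ℤ) : ℚ) * ((Nat.gcd p₁ p₂ : ℚ) * r₁) = (p₁ : ℚ) * r₁ := by
        have h' : (p₁ : ℚ) = (Nat.gcd p₁ p₂ : ℚ) * (c₁ : ℚ) := by exact_mod_cast congrArg (Nat.cast : ℕ → ℚ) hc₁
        rw [h']; push_cast; ring
      rwa [heq] at this
    have hp2r1 : IsIntQ ((p₂ : ℚ) * r₁) := by
      have := hdr.intMul (c₂ : ℤ)
      have heq : ((c₂ : ℤ) : ℚ) * ((Nat.gcd p₁ p₂ : ℚ) * r₁) = (p₂ : ℚ) * r₁ := by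
        have h' : (p₂ : ℚ) = (Nat.gcd p₁ p₂ : ℚ) * (c₂ : ℚ) := by exact_mod_cast congrArg (Nat.cast : ℕ → ℚ) hc₂
        rw [h']; push_cast; ring
      rwa [heq] at this
    have hp2r0 : IsIntQ ((p₂ : ℚ) * r₀) := hp₂r₀ h0
    have h01 : IsIntQ ((p₂ : ℚ) * (r₀ + r₁)) := by
      have := hp2r0.add hp2r1
      have heq : (p₂ : ℚ) * r₀ + (p₂ : ℚ) * r₁ = (p₂ : ℚ) * (r₀ + r₁) := by ring
      rwa [heq] at this
    have h2 : IsIntQ ((p₂ : ℚ) * r₂) := by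
      have := (hd.intMul (p₂ : ℤ)).add h01
      have heq : ((p₂ : ℤ) : ℚ) * (r₂ - r₀ - r₁) + (p₂ : ℚ) * (r₀ + r₁) = (p₂ : ℚ) * r₂ := by
        push_cast; ring
      rwa [heq] at this
    exact ⟨h0, h1, h2, h01, hd⟩
end

section
/- Let p₁, p₂ ≥ 3 be integers with 1/p₁ + 1/p₂ < 1/2 and d = gcd(p₁,p₂). A triple (r₀,r₁,r₂) of rationals with r₀ ∈ ℤ satisfies the Frobenius congruences for the screw motion groups of signature (2,p₁,p₂) if and only if d·r₁ ∈ ℤ and r₂ − r₁ ∈ ℤ; that is, modulo 1 the solutions with trivial first translation part are exactly the triples (0, m/d, m/d), m ∈ ℤ. -/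
/-- Theorem 3.9, case 1 (kernel point A, so r₀ ≡ 0 mod 1), congruence-level statement. -/
theorem frobenius_multiply_kernel_A (p₁ p₂ : ℕ) (hp₁ : 3 ≤ p₁) (hp₂ : 3 ≤ p₂)
    (hhyp : (1 : ℚ) / p₁ + 1 / p₂ < 1 / 2) (r₀ r₁ r₂ : ℚ) (hr₀ : IsIntQ r₀) :
    FrobCong p₁ p₂ r₀ r₁ r₂ ↔
      IsIntQ ((Nat.gcd p₁ p₂ : ℚ) * r₁) ∧ IsIntQ (r₂ - r₁) := by
  obtain ⟨k₀, hk₀⟩ := hr₀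
  subst hk₀
  constructor
  · rintro ⟨_, ⟨a, ha⟩, _, ⟨b, hb⟩, ⟨c, hc⟩⟩
    -- p₂ * r₁ is an integer
    have hp2r1 : (p₂ : ℚ) * r₁ = ((b - p₂ * k₀ : ℤ) : ℚ) := by
      push_cast
      rw [mul_add] at hb
      linarith
    constructor
    · refine ⟨Nat.gcdA p₁ p₂ * a + Nat.gcdB p₁ p₂ * (b - p₂ * k₀), ?_⟩
      have hg : ((Nat.gcd p₁ p₂ : ℤ) : ℚ) = ((p₁ : ℤ) : ℚ) * (Nat.gcdA p₁ p₂ : ℚ)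
          + ((p₂ : ℤ) : ℚ) * (Nat.gcdB p₁ p₂ : ℚ) := by
        have := Nat.gcd_eq_gcd_ab p₁ p₂
        exact_mod_cast congrArg (Int.cast : ℤ → ℚ) this
      push_cast at hg ⊢
      have hb' : (p₂ : ℚ) * r₁ = (b : ℚ) - (p₂ : ℚ) * (k₀ : ℚ) := by
        rw [mul_add] at hb; linarith
      linear_combination r₁ * hg + ((Nat.gcdA p₁ p₂ : ℚ)) * ha + ((Nat.gcdB p₁ p₂ : ℚ)) * hb'
    · exact ⟨c + k₀, by push_cast; linarith⟩
  · rintro ⟨⟨a, ha⟩, ⟨c, hc⟩⟩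
    have hd1 : (Nat.gcd p₁ p₂ : ℤ) ∣ (p₁ : ℤ) := Int.natCast_dvd_natCast.2 (Nat.gcd_dvd_left _ _)
    have hd2 : (Nat.gcd p₁ p₂ : ℤ) ∣ (p₂ : ℤ) := Int.natCast_dvd_natCast.2 (Nat.gcd_dvd_right _ _)
    obtain ⟨u, hu⟩ := hd1
    obtain ⟨v, hv⟩ := hd2
    have hp1r1 : (p₁ : ℚ) * r₁ = ((u * a : ℤ) : ℚ) := by
      have : ((p₁ : ℤ) : ℚ) = ((Nat.gcd p₁ p₂ : ℤ) : ℚ) * (u : ℚ) := by exact_mod_cast congrArg (Int.cast : ℤ → ℚ) hu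
      push_cast at this ⊢
      linear_combination r₁ * this + (u : ℚ) * ha
    have hp2r1 : (p₂ : ℚ) * r₁ = ((v * a : ℤ) : ℚ) := by
      have : ((p₂ : ℤ) : ℚ) = ((Nat.gcd p₁ p₂ : ℤ) : ℚ) * (v : ℚ) := by exact_mod_cast congrArg (Int.cast : ℤ → ℚ) hv
      push_cast at this ⊢
      linear_combination r₁ * this + (v : ℚ) * ha
    refine ⟨⟨2 * k₀, by push_cast; ring⟩, ⟨u * a, hp1r1⟩, ⟨v * a + p₂ * c, ?_⟩,
      ⟨p₂ * k₀ + v * a, ?_⟩, ⟨c - k₀, by push_cast; linarith⟩⟩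
    · have : r₂ = r₁ + (c : ℚ) := by linarith
      rw [this]
      push_cast at hp2r1 ⊢
      linarith [hp2r1]
    · push_cast at hp2r1 ⊢
      rw [mul_add]
      linarith [hp2r1]
end

section
/- Let p₁, p₂ ≥ 3 be integers with 1/p₁ + 1/p₂ < 1/2 and with p₂ even. A triple (r₀,r₁,r₂) of rationals with r₁ ∈ ℤ satisfies the Frobenius congruences for the screw motion groups of signature (2,p₁,p₂) if and only if 2·r₀ ∈ ℤ and r₂ − r₀ ∈ ℤ; that is, modulo 1 the solutions with trivial second translation part are exactly the triples (0,0,0) and (±1/2, 0, ±1/2). -/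
/-- Theorem 3.9, case 2 with p₂ even (kernel point B, so r₁ ≡ 0 mod 1). -/
theorem frobenius_multiply_kernel_B_even (p₁ p₂ : ℕ) (hp₁ : 3 ≤ p₁) (hp₂ : 3 ≤ p₂)
    (he₂ : Even p₂)
    (hhyp : (1 : ℚ) / p₁ + 1 / p₂ < 1 / 2) (r₀ r₁ r₂ : ℚ) (hr₁ : IsIntQ r₁) :
    FrobCong p₁ p₂ r₀ r₁ r₂ ↔ IsIntQ (2 * r₀) ∧ IsIntQ (r₂ - r₀) := by
  obtain ⟨k₁, hk₁⟩ := hr₁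
  obtain ⟨m, hm⟩ := he₂
  constructor
  · rintro ⟨h0, -, -, -, ⟨k, hk⟩⟩
    refine ⟨h0, k + k₁, ?_⟩
    have : r₂ - r₀ - r₁ = (k : ℚ) := hk
    push_cast
    linarith [hk₁]
  · rintro ⟨⟨a, ha⟩, b, hb⟩
    refine ⟨⟨a, ha⟩, ⟨p₁ * k₁, by push_cast; rw [hk₁]⟩, ⟨m * a + p₂ * b, ?_⟩,
      ⟨m * a + p₂ * k₁, ?_⟩, ⟨b - k₁, ?_⟩⟩
    · have hr₂ : r₂ = (b : ℚ) + r₀ := by linarith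
      have hp : (p₂ : ℚ) = 2 * m := by exact_mod_cast hm.trans (two_mul m).symm
      push_cast
      rw [hr₂, hp]; linear_combination (m:ℚ) * ha
    · have hp : (p₂ : ℚ) = 2 * m := by exact_mod_cast hm.trans (two_mul m).symm
      push_cast
      rw [hp, hk₁]; linear_combination (m:ℚ) * ha
    · push_cast; linarith [hk₁, hb]
end

section
/- Let p₁, p₂ ≥ 3 be integers with 1/p₁ + 1/p₂ < 1/2 and with p₁ even. A triple (r₀,r₁,r₂) of rationals with r₂ ∈ ℤ satisfies the Frobenius congruences for the screw motion groups of signature (2,p₁,p₂) if and only if 2·r₀ ∈ ℤ and r₀ + r₁ ∈ ℤ; that is, modulo 1 the solutions with trivial third translation part are exactly the triples (0,0,0) and (±1/2, ±1/2, 0). -/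
/-- Theorem 3.9, case 3 with p₁ even (kernel point C, so r₂ ≡ 0 mod 1). -/
theorem frobenius_multiply_kernel_C_even (p₁ p₂ : ℕ) (hp₁ : 3 ≤ p₁) (hp₂ : 3 ≤ p₂)
    (he₁ : Even p₁)
    (hhyp : (1 : ℚ) / p₁ + 1 / p₂ < 1 / 2) (r₀ r₁ r₂ : ℚ) (hr₂ : IsIntQ r₂) :
    FrobCong p₁ p₂ r₀ r₁ r₂ ↔ IsIntQ (2 * r₀) ∧ IsIntQ (r₀ + r₁) := by
  obtain ⟨m, hm⟩ := hr₂
  constructor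
  · rintro ⟨h0, h1, h2, h3, ⟨k, hk⟩⟩
    refine ⟨h0, ⟨m - k, ?_⟩⟩
    push_cast
    linarith
  · rintro ⟨⟨a, ha⟩, ⟨b, hb⟩⟩
    obtain ⟨c, hc⟩ := he₁
    refine ⟨⟨a, ha⟩, ⟨c * (2 * b - a), ?_⟩, ⟨p₂ * m, ?_⟩, ⟨p₂ * b, ?_⟩, ⟨m - b, ?_⟩⟩
    · have : (p₁ : ℚ) = 2 * c := by rw [hc]; push_cast; ring
      rw [this]; push_cast; nlinarith
    · rw [hm]; push_cast; ring
    · rw [hb]; push_cast; ring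
    · push_cast; linarith
end

section
/- Let p₁, p₂ ≥ 3 be integers with 1/p₁ + 1/p₂ < 1/2 and with p₁ odd. A triple (r₀,r₁,r₂) of rationals with r₂ ∈ ℤ satisfies the Frobenius congruences for the screw motion groups of signature (2,p₁,p₂) if and only if r₀ ∈ ℤ and r₁ ∈ ℤ; that is, modulo 1 the only solution with trivial third translation part is (0,0,0). -/
lemma isIntQ_odd_mul {p : ℕ} (hp : Odd p) {q : ℚ} (h2 : IsIntQ (2 * q))
    (hpq : IsIntQ ((p : ℚ) * q)) : IsIntQ q := by
  obtain ⟨k, hk⟩ := hp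
  obtain ⟨m, hm⟩ := h2
  obtain ⟨n, hn⟩ := hpq
  refine ⟨n - k * m, ?_⟩
  have hpQ : (p : ℚ) = 2 * k + 1 := by push_cast [hk]; ring
  push_cast
  rw [← hm, ← hn, hpQ]
  ring

/-- Theorem 3.9, case 3 with p₁ odd (kernel point C, so r₂ ≡ 0 mod 1). -/
theorem frobenius_multiply_kernel_C_odd (p₁ p₂ : ℕ) (hp₁ : 3 ≤ p₁) (hp₂ : 3 ≤ p₂)
    (ho₁ : Odd p₁)
    (hhyp : (1 : ℚ) / p₁ + 1 / p₂ < 1 / 2) (r₀ r₁ r₂ : ℚ) (hr₂ : IsIntQ r₂) :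
    FrobCong p₁ p₂ r₀ r₁ r₂ ↔ IsIntQ r₀ ∧ IsIntQ r₁ := by
  obtain ⟨c, hc⟩ := hr₂
  constructor
  · rintro ⟨⟨m, hm⟩, hq1, -, -, ⟨s, hs⟩⟩
    -- r₀ + r₁ = c - s ∈ ℤ
    have hsum : r₀ + r₁ = ((c - s : ℤ) : ℚ) := by
      push_cast; rw [← hs, hc]; ring
    -- 2 * r₁ ∈ ℤ
    have h2r1 : IsIntQ (2 * r₁) := by
      refine ⟨2 * (c - s) - m, ?_⟩
      push_cast
      rw [← hm]
      have : r₁ = ((c - s : ℤ) : ℚ) - r₀ := by rw [← hsum]; ring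
      rw [this]; push_cast; ring
    have hr1 : IsIntQ r₁ := isIntQ_odd_mul ho₁ h2r1 hq1
    obtain ⟨a, ha⟩ := hr1
    refine ⟨⟨c - s - a, ?_⟩, ⟨a, ha⟩⟩
    push_cast
    have : r₀ = ((c - s : ℤ) : ℚ) - r₁ := by rw [← hsum]; ring
    rw [this, ha]; push_cast; ring
  · rintro ⟨⟨a, ha⟩, ⟨b, hb⟩⟩
    exact ⟨⟨2 * a, by rw [ha]; push_cast; ring⟩,
      ⟨p₁ * b, by rw [hb]; push_cast; ring⟩,
      ⟨p₂ * c, by rw [hc]; push_cast; ring⟩,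
      ⟨p₂ * (a + b), by rw [ha, hb]; push_cast; ring⟩,
      ⟨c - a - b, by rw [ha, hb, hc]; push_cast; ring⟩⟩
end

section
/- For all real u, v with v ∈ [−π/2, π/2] and all real τ, the curve γ_{u,v}(τ) = (e^{τ sin v}·cosh(τ cos v), e^{τ sin v}·sinh(τ cos v)·cos u, e^{τ sin v}·sinh(τ cos v)·sin u) satisfies γ_{u,v}(0) = (1,0,0), γ′_{u,v}(0) = (sin v, cos v·cos u, cos v·sin u), and Q(γ_{u,v}(τ), γ′_{u,v}(τ)) = 1 for every τ, where γ′ denotes the componentwise derivative; i.e. the geodesic curves of H²×R are parametrized by arc length. -/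
open Real

/-- The quadratic form giving the infinitesimal arc-length square of H²×R in the
projective model: `Q (x,y,z) (a,b,c)`. -/
noncomputable def Qform (p w : ℝ × ℝ × ℝ) : ℝ :=
  ((p.1 ^ 2 + p.2.1 ^ 2 + p.2.2 ^ 2) * w.1 ^ 2
      - 4 * p.1 * p.2.1 * w.1 * w.2.1
      - 4 * p.1 * p.2.2 * w.1 * w.2.2
      + (p.1 ^ 2 + p.2.1 ^ 2 - p.2.2 ^ 2) * w.2.1 ^ 2
      + 4 * p.2.1 * p.2.2 * w.2.1 * w.2.2
      + (p.1 ^ 2 - p.2.1 ^ 2 + p.2.2 ^ 2) * w.2.2 ^ 2) /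
    (p.1 ^ 2 - p.2.1 ^ 2 - p.2.2 ^ 2) ^ 2

/-- The parametrized geodesic of H²×R starting at (1,0,0) with direction (u,v). -/
noncomputable def geo (u v τ : ℝ) : ℝ × ℝ × ℝ :=
  (exp (τ * sin v) * cosh (τ * cos v),
   exp (τ * sin v) * sinh (τ * cos v) * cos u,
   exp (τ * sin v) * sinh (τ * cos v) * sin u)

/-- The componentwise derivative of the geodesic. -/
noncomputable def geoDeriv (u v τ : ℝ) : ℝ × ℝ × ℝ :=
  (deriv (fun t => (geo u v t).1) τ,
   deriv (fun t => (geo u v t).2.1) τ,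
   deriv (fun t => (geo u v t).2.2) τ)

lemma geoDeriv_eq (u v τ : ℝ) :
    geoDeriv u v τ =
      (exp (τ * sin v) * (sin v * cosh (τ * cos v) + cos v * sinh (τ * cos v)),
       exp (τ * sin v) * (sin v * sinh (τ * cos v) + cos v * cosh (τ * cos v)) * cos u,
       exp (τ * sin v) * (sin v * sinh (τ * cos v) + cos v * cosh (τ * cos v)) * sin u) := by
  have hs : HasDerivAt (fun t : ℝ => t * sin v) (sin v) τ := hasDerivAt_mul_const _
  have hc : HasDerivAt (fun t : ℝ => t * cos v) (cos v) τ := hasDerivAt_mul_const _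
  have h1 : HasDerivAt (fun t => exp (t * sin v) * cosh (t * cos v))
      (exp (τ * sin v) * sin v * cosh (τ * cos v)
        + exp (τ * sin v) * (sinh (τ * cos v) * cos v)) τ := (hs.exp).mul (hc.cosh)
  have h2a : HasDerivAt (fun t => exp (t * sin v) * sinh (t * cos v) * cos u)
      ((exp (τ * sin v) * sin v * sinh (τ * cos v)
        + exp (τ * sin v) * (cosh (τ * cos v) * cos v)) * cos u) τ :=
    ((hs.exp).mul (hc.sinh)).mul_const _
  have h2b : HasDerivAt (fun t => exp (t * sin v) * sinh (t * cos v) * sin u)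
      ((exp (τ * sin v) * sin v * sinh (τ * cos v)
        + exp (τ * sin v) * (cosh (τ * cos v) * cos v)) * sin u) τ :=
    ((hs.exp).mul (hc.sinh)).mul_const _
  simp only [geoDeriv, geo]
  rw [h1.deriv, h2a.deriv, h2b.deriv]
  simp only [Prod.mk.injEq]
  refine ⟨by ring, by ring, by ring⟩

/-- The geodesic curves of H²×R start at (1,0,0) with unit initial velocity
(sin v, cos v·cos u, cos v·sin u), and are parametrized by arc length. -/
theorem geodesic_arclength (u v : ℝ) (hv : v ∈ Set.Icc (-(π / 2)) (π / 2)) (τ : ℝ) :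
    geo u v 0 = (1, 0, 0) ∧
    geoDeriv u v 0 = (sin v, cos v * cos u, cos v * sin u) ∧
    Qform (geo u v τ) (geoDeriv u v τ) = 1 := by
  refine ⟨by simp [geo], ?_, ?_⟩
  · rw [geoDeriv_eq]; simp [mul_comm]
  · rw [geoDeriv_eq]
    simp only [Qform, geo]
    have hch : cosh (τ * cos v) ^ 2 - sinh (τ * cos v) ^ 2 = 1 :=
      Real.cosh_sq_sub_sinh_sq (τ * cos v)
    have hsc : sin v ^ 2 + cos v ^ 2 = 1 := sin_sq_add_cos_sq v
    have hu : cos u ^ 2 + sin u ^ 2 = 1 := cos_sq_add_sin_sq u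
    have hden : (exp (τ * sin v) * cosh (τ * cos v)) ^ 2
        - (exp (τ * sin v) * sinh (τ * cos v) * cos u) ^ 2
        - (exp (τ * sin v) * sinh (τ * cos v) * sin u) ^ 2
        = exp (τ * sin v) ^ 2 := by
      linear_combination (exp (τ * sin v)) ^ 2 * hch
        - (exp (τ * sin v) * sinh (τ * cos v)) ^ 2 * hu
    rw [hden, div_eq_one_iff_eq (by positivity)]
    linear_combination ((exp (τ * sin v)) ^ 4 * (cos v) ^ 2 * (sin u) ^ 2 + (exp (τ * sin v)) ^ 4 * (cos v) ^ 2 * (cos u) ^ 2 + (exp (τ * sin v)) ^ 4 * (sin v) ^ 2 + (exp (τ * sin v)) ^ 4 * (sinh (τ * cos v)) ^ 2 * (cos v) ^ 2 + (-3) * (exp (τ * sin v)) ^ 4 * (sinh (τ * cos v)) ^ 2 * (cos v) ^ 2 * (sin u) ^ 2 + (exp (τ * sin v)) ^ 4 * (sinh (τ * cos v)) ^ 2 * (cos v) ^ 2 * (sin u) ^ 4 + (-3) * (exp (τ * sin v)) ^ 4 * (sinh (τ * cos v)) ^ 2 * (cos v) ^ 2 * (cos u) ^ 2 + (2) * (exp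 (τ * sin v)) ^ 4 * (sinh (τ * cos v)) ^ 2 * (cos v) ^ 2 * (cos u) ^ 2 * (sin u) ^ 2 + (exp (τ * sin v)) ^ 4 * (sinh (τ * cos v)) ^ 2 * (cos v) ^ 2 * (cos u) ^ 4 + (exp (τ * sin v)) ^ 4 * (sinh (τ * cos v)) ^ 2 * (sin v) ^ 2 + (-2) * (exp (τ * sin v)) ^ 4 * (sinh (τ * cos v)) ^ 2 * (sin v) ^ 2 * (sin u) ^ 2 + (-2) * (exp (τ * sin v)) ^ 4 * (sinh (τ * cos v)) ^ 2 * (sin v) ^ 2 * (cos u) ^ 2 + (2) * (exp (τ * sin v)) ^ 4 * (cosh (τ * cos v)) * (sinh (τ * cos v)) * (sin v) * (cos v) + (-2) * (exp (τ * sin v)) ^ 4 * (cosh (τ * cos v)) * (sinh (τ * cos v)) * (sin v) * (cos v) * (sin u) ^ 2 + (-2) * (exp (τ * sin v)) ^ 4 * (cosh (τ * cos v)) * (sinh (τ * cos v)) * (sin v) * (cos v) * (cos u) ^ 2 + (exp (τ * sin v)) ^ 4 * (cosh (τ * cos v)) ^ 2 * (cos v) ^ 2 * (sin u) ^ 2 +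 (exp (τ * sin v)) ^ 4 * (cosh (τ * cos v)) ^ 2 * (cos v) ^ 2 * (cos u) ^ 2 + (exp (τ * sin v)) ^ 4 * (cosh (τ * cos v)) ^ 2 * (sin v) ^ 2) * hch +
      ((exp (τ * sin v)) ^ 4 * (sin u) ^ 2 + (exp (τ * sin v)) ^ 4 * (cos u) ^ 2 + (exp (τ * sin v)) ^ 4 * (sinh (τ * cos v)) ^ 2 + (-2) * (exp (τ * sin v)) ^ 4 * (sinh (τ * cos v)) ^ 2 * (sin u) ^ 2 + (exp (τ * sin v)) ^ 4 * (sinh (τ * cos v)) ^ 2 * (sin u) ^ 4 + (-2) * (exp (τ * sin v)) ^ 4 * (sinh (τ * cos v)) ^ 2 * (cos u) ^ 2 + (2) * (exp (τ * sin v)) ^ 4 * (sinh (τ * cos v)) ^ 2 * (cos u) ^ 2 * (sin u) ^ 2 + (exp (τ * sin v)) ^ 4 * (sinh (τ * cos v)) ^ 2 * (cos u) ^ 4 + (exp (τ * sin v)) ^ 4 * (sinh (τ * cos v)) ^ 4 + (-2) * (exp (τ * sin v)) ^ 4 * (sinh (τ * cos v)) ^ 4 * (sin u) ^ 2 + (exp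 (τ * sin v)) ^ 4 * (sinh (τ * cos v)) ^ 4 * (sin u) ^ 4 + (-2) * (exp (τ * sin v)) ^ 4 * (sinh (τ * cos v)) ^ 4 * (cos u) ^ 2 + (2) * (exp (τ * sin v)) ^ 4 * (sinh (τ * cos v)) ^ 4 * (cos u) ^ 2 * (sin u) ^ 2 + (exp (τ * sin v)) ^ 4 * (sinh (τ * cos v)) ^ 4 * (cos u) ^ 4) * hsc +
      ((exp (τ * sin v)) ^ 4 + (-1) * (exp (τ * sin v)) ^ 4 * (sin v) ^ 2 + (-1) * (exp (τ * sin v)) ^ 4 * (sinh (τ * cos v)) ^ 2 + (exp (τ * sin v)) ^ 4 * (sinh (τ * cos v)) ^ 2 * (sin u) ^ 2 + (exp (τ * sin v)) ^ 4 * (sinh (τ * cos v)) ^ 2 * (cos u) ^ 2 + (-1) * (exp (τ * sin v)) ^ 4 * (sinh (τ * cos v)) ^ 2 * (sin v) ^ 2 + (-1) * (exp (τ * sin v)) ^ 4 * (sinh (τ * cos v)) ^ 2 * (sin v) ^ 2 * (sin u) ^ 2 + (-1) * (exp (τ * sin v)) ^ 4 * (sinh (τ * cos v)) ^ 2 * (sin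 v) ^ 2 * (cos u) ^ 2 + (-1) * (exp (τ * sin v)) ^ 4 * (sinh (τ * cos v)) ^ 4 + (exp (τ * sin v)) ^ 4 * (sinh (τ * cos v)) ^ 4 * (sin u) ^ 2 + (exp (τ * sin v)) ^ 4 * (sinh (τ * cos v)) ^ 4 * (cos u) ^ 2 + (-2) * (exp (τ * sin v)) ^ 4 * (cosh (τ * cos v)) * (sinh (τ * cos v)) * (sin v) * (cos v) + (-2) * (exp (τ * sin v)) ^ 4 * (cosh (τ * cos v)) * (sinh (τ * cos v)) ^ 3 * (sin v) * (cos v) + (2) * (exp (τ * sin v)) ^ 4 * (cosh (τ * cos v)) * (sinh (τ * cos v)) ^ 3 * (sin v) * (cos v) * (sin u) ^ 2 + (2) * (exp (τ * sin v)) ^ 4 * (cosh (τ * cos v)) * (sinh (τ * cos v)) ^ 3 * (sin v) * (cos v) * (cos u) ^ 2) * hu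
end

section
/- Let Ψ(τ,v,u) = (e^{τ sin v}·cosh(τ cos v), e^{τ sin v}·sinh(τ cos v)·cos u, e^{τ sin v}·sinh(τ cos v)·sin u), the geodesic polar coordinate map of H²×R. Then for all real τ, v, u the Jacobian determinant of Ψ satisfies |det DΨ(τ,v,u)| = e^{3τ sin v}·|τ·sinh(τ cos v)|; equivalently, writing (x,y,z) = Ψ(τ,v,u), one has (x² − y² − z²)^{−3/2}·|det DΨ(τ,v,u)| = |τ·sinh(τ cos v)|. This is the change-of-variables identity underlying the geodesic ball volume formula Vol(B(ρ)) = 2π·∫₀^ρ∫_{−π/2}^{π/2} |τ·sinh(τ cos v)| dv dτ. -/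
open Real

/-- First coordinate of the geodesic polar coordinate map Ψ of H²×R. -/
noncomputable def PsiX (τ v u : ℝ) : ℝ := exp (τ * sin v) * cosh (τ * cos v)

/-- Second coordinate of the geodesic polar coordinate map Ψ of H²×R. -/
noncomputable def PsiY (τ v u : ℝ) : ℝ := exp (τ * sin v) * sinh (τ * cos v) * cos u

/-- Third coordinate of the geodesic polar coordinate map Ψ of H²×R. -/
noncomputable def PsiZ (τ v u : ℝ) : ℝ := exp (τ * sin v) * sinh (τ * cos v) * sin u

/-- The Jacobian matrix of Ψ at (τ,v,u), with entries the partial derivatives of the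
coordinate functions. -/
noncomputable def JacPsi (τ v u : ℝ) : Matrix (Fin 3) (Fin 3) ℝ :=
  !![deriv (fun s => PsiX s v u) τ, deriv (fun s => PsiX τ s u) v, deriv (fun s => PsiX τ v s) u;
     deriv (fun s => PsiY s v u) τ, deriv (fun s => PsiY τ s u) v, deriv (fun s => PsiY τ v s) u;
     deriv (fun s => PsiZ s v u) τ, deriv (fun s => PsiZ τ s u) v, deriv (fun s => PsiZ τ v s) u]

lemma jac_det (τ v u : ℝ) :
    (JacPsi τ v u).det = -(exp (τ * sin v))^3 * (τ * sinh (τ * cos v)) := by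
  have hE : HasDerivAt (fun s : ℝ => exp (s * sin v)) (exp (τ * sin v) * sin v) τ :=
    (hasDerivAt_mul_const (sin v)).exp
  have hC : HasDerivAt (fun s : ℝ => cosh (s * cos v)) (sinh (τ * cos v) * cos v) τ :=
    (hasDerivAt_mul_const (cos v)).cosh
  have hS : HasDerivAt (fun s : ℝ => sinh (s * cos v)) (cosh (τ * cos v) * cos v) τ :=
    (hasDerivAt_mul_const (cos v)).sinh
  have hEv : HasDerivAt (fun s : ℝ => exp (τ * sin s)) (exp (τ * sin v) * (τ * cos v)) v :=
    ((Real.hasDerivAt_sin v).const_mul τ).exp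
  have hCv : HasDerivAt (fun s : ℝ => cosh (τ * cos s)) (sinh (τ * cos v) * (τ * -sin v)) v :=
    ((Real.hasDerivAt_cos v).const_mul τ).cosh
  have hSv : HasDerivAt (fun s : ℝ => sinh (τ * cos s)) (cosh (τ * cos v) * (τ * -sin v)) v :=
    ((Real.hasDerivAt_cos v).const_mul τ).sinh
  have h11 : deriv (fun s => PsiX s v u) τ
      = exp (τ * sin v) * sin v * cosh (τ * cos v)
        + exp (τ * sin v) * (sinh (τ * cos v) * cos v) := by
    unfold PsiX; exact (hE.mul hC).deriv
  have h12 : deriv (fun s => PsiX τ s u) v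
      = exp (τ * sin v) * (τ * cos v) * cosh (τ * cos v)
        + exp (τ * sin v) * (sinh (τ * cos v) * (τ * -sin v)) := by
    unfold PsiX; exact (hEv.mul hCv).deriv
  have h13 : deriv (fun s => PsiX τ v s) u = 0 := by
    unfold PsiX; exact deriv_const u _
  have h21 : deriv (fun s => PsiY s v u) τ
      = (exp (τ * sin v) * sin v * sinh (τ * cos v)
        + exp (τ * sin v) * (cosh (τ * cos v) * cos v)) * cos u := by
    unfold PsiY; exact ((hE.mul hS).mul_const (cos u)).deriv
  have h22 : deriv (fun s => PsiY τ s u) v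
      = (exp (τ * sin v) * (τ * cos v) * sinh (τ * cos v)
        + exp (τ * sin v) * (cosh (τ * cos v) * (τ * -sin v))) * cos u := by
    unfold PsiY; exact ((hEv.mul hSv).mul_const (cos u)).deriv
  have h23 : deriv (fun s => PsiY τ v s) u
      = exp (τ * sin v) * sinh (τ * cos v) * -sin u := by
    unfold PsiY
    exact ((Real.hasDerivAt_cos u).const_mul (exp (τ * sin v) * sinh (τ * cos v))).deriv
  have h31 : deriv (fun s => PsiZ s v u) τ
      = (exp (τ * sin v) * sin v * sinh (τ * cos v)
        + exp (τ * sin v) * (cosh (τ * cos v) * cos v)) * sin u := by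
    unfold PsiZ; exact ((hE.mul hS).mul_const (sin u)).deriv
  have h32 : deriv (fun s => PsiZ τ s u) v
      = (exp (τ * sin v) * (τ * cos v) * sinh (τ * cos v)
        + exp (τ * sin v) * (cosh (τ * cos v) * (τ * -sin v))) * sin u := by
    unfold PsiZ; exact ((hEv.mul hSv).mul_const (sin u)).deriv
  have h33 : deriv (fun s => PsiZ τ v s) u
      = exp (τ * sin v) * sinh (τ * cos v) * cos u := by
    unfold PsiZ
    exact ((Real.hasDerivAt_sin u).const_mul (exp (τ * sin v) * sinh (τ * cos v))).deriv
  rw [JacPsi, Matrix.det_fin_three]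
  simp only [Matrix.of_apply, Matrix.cons_val', Matrix.cons_val_zero, Matrix.cons_val_one,
    Matrix.head_cons, Matrix.cons_val_two, Matrix.tail_cons, Matrix.empty_val',
    Matrix.cons_val_fin_one, Matrix.head_fin_const]
  rw [h11, h12, h13, h21, h22, h23, h31, h32, h33]
  have hc : cosh (τ * cos v) ^ 2 - sinh (τ * cos v) ^ 2 = 1 := Real.cosh_sq_sub_sinh_sq _
  have hv : sin v ^ 2 + cos v ^ 2 = 1 := sin_sq_add_cos_sq v
  have hu2 : sin u ^ 2 + cos u ^ 2 = 1 := sin_sq_add_cos_sq u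
  linear_combination (-(exp (τ * sin v))^3 * τ * sinh (τ * cos v)) *
      ((sin v ^ 2 + cos v ^ 2) * (sin u ^ 2 + cos u ^ 2) * hc
        + (sin u ^ 2 + cos u ^ 2) * hv + hu2)

/-- The change-of-variables identity underlying the geodesic ball volume formula of H²×R:
|det DΨ| = e^{3τ sin v}·|τ·sinh(τ cos v)|, and against the Riemannian volume element
(x² − y² − z²)^{−3/2} it yields exactly |τ·sinh(τ cos v)|. -/
theorem jacobian_geodesic_polar (τ v u : ℝ) :
    |(JacPsi τ v u).det| = exp (3 * (τ * sin v)) * |τ * sinh (τ * cos v)| ∧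
    ((PsiX τ v u) ^ 2 - (PsiY τ v u) ^ 2 - (PsiZ τ v u) ^ 2) ^ (-(3 / 2) : ℝ) *
        |(JacPsi τ v u).det|
      = |τ * sinh (τ * cos v)| := by
  have hdet := jac_det τ v u
  have hEpos : (0:ℝ) < exp (τ * sin v) := exp_pos _
  have h1 : |(JacPsi τ v u).det| = exp (3 * (τ * sin v)) * |τ * sinh (τ * cos v)| := by
    rw [hdet, abs_mul, abs_neg, abs_pow, abs_of_pos hEpos, ← Real.exp_nat_mul]
    norm_num
  refine ⟨h1, ?_⟩
  have hq : (PsiX τ v u) ^ 2 - (PsiY τ v u) ^ 2 - (PsiZ τ v u) ^ 2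
      = exp (2 * (τ * sin v)) := by
    have hc : cosh (τ * cos v) ^ 2 - sinh (τ * cos v) ^ 2 = 1 := Real.cosh_sq_sub_sinh_sq _
    have hu2 : sin u ^ 2 + cos u ^ 2 = 1 := sin_sq_add_cos_sq u
    unfold PsiX PsiY PsiZ
    rw [show (2:ℝ) * (τ * sin v) = τ * sin v + τ * sin v by ring, Real.exp_add]
    linear_combination (exp (τ * sin v))^2 * hc
      - (exp (τ * sin v))^2 * sinh (τ * cos v)^2 * hu2
  rw [hq, h1, ← Real.exp_mul,
    show (2 * (τ * sin v)) * (-(3/2) : ℝ) = -(3 * (τ * sin v)) by ring,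
    Real.exp_neg, ← mul_assoc, inv_mul_cancel₀ (ne_of_gt (exp_pos _)), one_mul]
end
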